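/- Let Γ be a countably infinite group, f ∈ ℝΓ well-balanced, μ ∈ ℝΓ given by μ_e = 0 and μ_s = −f_s/f_e for s ≠ e, assume Σ_{k=0}^∞ ‖μ^k‖_∞ < ∞, and set ω_s = f_e^{-1} Σ_{k=0}^∞ (μ^k)_s. If g : Γ → ℝ tends to 0 along the cofinite filter on Γ and gf = δ_e (that is, for every w ∈ Γ, Σ_{s∈Γ} g_{ws⁻¹} f_s equals 1 if w = e and 0 otherwise), then g = ω. -/

import Mathlib

open Filter Topology
open scoped Classical

noncomputable section

/-- `f ∈ ℝΓ` is well-balanced: finitely supported, coefficients sum to `0`,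
nonpositive off the identity, symmetric, and with support generating `Γ`. -/
def WellBalancedR {G : Type*} [Group G] (f : G → ℝ) : Prop :=
  (Function.support f).Finite ∧ (∑ᶠ s : G, f s) = 0 ∧
    (∀ s : G, s ≠ 1 → f s ≤ 0) ∧ (∀ s : G, f s⁻¹ = f s) ∧
    Subgroup.closure (Function.support f) = ⊤

/-- Convolution `(uv)_w = ∑_s u_s v_{s⁻¹ w}` in `ℝΓ`. -/
def convR {G : Type*} [Group G] (u v : G → ℝ) : G → ℝ :=
  fun w => ∑ᶠ s : G, u s * v (s⁻¹ * w)

/-- Convolution powers `u^k` in `ℝΓ`, with `u^0 = δ_e`. -/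
def convPow {G : Type*} [Group G] (u : G → ℝ) : ℕ → G → ℝ
  | 0 => fun s => if s = 1 then 1 else 0
  | k + 1 => convR u (convPow u k)

/-- `μ ∈ ℝΓ` associated to a well-balanced `f`: `μ_e = 0`, `μ_s = -f_s/f_e` for `s ≠ e`. -/
def muOf {G : Type*} [Group G] (f : G → ℝ) : G → ℝ :=
  fun s => if s = 1 then 0 else -(f s) / f 1

/-- `ω_s = f_e⁻¹ ∑_{k≥0} (μ^k)_s`. -/
def omegaOf {G : Type*} [Group G] (f : G → ℝ) : G → ℝ :=
  fun s => (f 1)⁻¹ * ∑' k : ℕ, convPow (muOf f) k s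

/-!
With `μ = muOf f` we have `f = f_e (δ_e - μ)`, and `f_e > 0` because `f ≠ 0` sums to zero and is
nonpositive off `e`; moreover `μ` is a finitely supported probability measure. So `g f = δ_e`
reads `g μ = g - f_e⁻¹ δ_e`, and associativity of convolution telescopes this into
`g - g μⁿ = f_e⁻¹ ∑_{k<n} μᵏ`. Since `g` vanishes at infinity while the probability measures `μⁿ`
satisfy `‖μⁿ‖_∞ → 0`, the averages `g μⁿ` tend to `0` pointwise, so the partial sums
of `f_e⁻¹ ∑ μᵏ` converge to `g`.
-/

open Function
open scoped Pointwise

section Convolution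

variable {G : Type*} [Group G]

lemma convR_apply_eq_finsum (u v : G → ℝ) (w : G) :
    convR u v w = ∑ᶠ s, u (w * s⁻¹) * v s := by
  rw [convR, ← finsum_comp_equiv ((Equiv.inv G).trans (Equiv.mulLeft w))]
  simp [mul_assoc]

lemma convR_apply_eq_sum_left {u : G → ℝ} (hu : (support u).Finite) (v : G → ℝ) (w : G) :
    convR u v w = ∑ t ∈ hu.toFinset, u t * v (t⁻¹ * w) :=
  finsum_eq_sum_of_support_subset _ <| by
    rw [hu.coe_toFinset]; exact support_mul_subset_left _ _

lemma convR_apply_eq_sum_right (u : G → ℝ) {v : G → ℝ} (hv : (support v).Finite) (w : G) :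
    convR u v w = ∑ s ∈ hv.toFinset, u (w * s⁻¹) * v s := by
  rw [convR_apply_eq_finsum]
  exact finsum_eq_sum_of_support_subset _ <| by
    rw [hv.coe_toFinset]; exact support_mul_subset_right _ _

lemma support_convR_subset (u v : G → ℝ) : support (convR u v) ⊆ support u * support v := by
  intro w hw
  obtain ⟨s, hs⟩ : ∃ s, u s * v (s⁻¹ * w) ≠ 0 := by
    by_contra! h
    exact hw (finsum_eq_zero_of_forall_eq_zero h)
  exact ⟨s, left_ne_zero_of_mul hs, s⁻¹ * w, right_ne_zero_of_mul hs, mul_inv_cancel_left s w⟩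

theorem convR_assoc (g : G → ℝ) {u v : G → ℝ} (hu : (support u).Finite)
    (hv : (support v).Finite) : convR (convR g u) v = convR g (convR u v) := by
  funext w
  have hfin (t : G) : (support fun r => g (w * r⁻¹) * (u t * v (t⁻¹ * r))).Finite :=
    (hv.preimage (mul_right_injective t⁻¹).injOn).subset <|
      (support_mul_subset_right _ _).trans (support_mul_subset_right _ _)
  calc convR (convR g u) v w
      = ∑ t ∈ hu.toFinset, ∑ s ∈ hv.toFinset, g (w * (t * s)⁻¹) * (u t * v s) := by
        simp only [convR_apply_eq_sum_right _ hv, convR_apply_eq_sum_right _ hu, Finset.sum_mul]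
        rw [Finset.sum_comm]
        simp only [mul_inv_rev, mul_assoc]
    _ = ∑ t ∈ hu.toFinset, ∑ᶠ r, g (w * r⁻¹) * (u t * v (t⁻¹ * r)) := by
        refine Finset.sum_congr rfl fun t _ => ?_
        rw [← finsum_comp_equiv (Equiv.mulLeft t)]
        simp only [Equiv.coe_mulLeft, inv_mul_cancel_left]
        refine (finsum_eq_sum_of_support_subset _ ?_).symm
        rw [hv.coe_toFinset]
        exact (support_mul_subset_right _ _).trans (support_mul_subset_right _ _)
    _ = convR g (convR u v) w := by
        rw [convR_apply_eq_finsum, ← finsum_sum_comm _ _ fun t _ => hfin t]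
        simp only [convR_apply_eq_sum_left hu, Finset.mul_sum]

lemma convR_sub_left (u₁ u₂ : G → ℝ) {v : G → ℝ} (hv : (support v).Finite) :
    convR (u₁ - u₂) v = convR u₁ v - convR u₂ v := by
  funext w
  simp only [convR_apply_eq_sum_right _ hv, Pi.sub_apply, sub_mul, Finset.sum_sub_distrib]

lemma convR_sub_right (u : G → ℝ) {v₁ v₂ : G → ℝ} (hv₁ : (support v₁).Finite)
    (hv₂ : (support v₂).Finite) : convR u (v₁ - v₂) = convR u v₁ - convR u v₂ := by
  funext w
  simp only [convR_apply_eq_finsum, Pi.sub_apply, mul_sub]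
  exact finsum_sub_distrib (hv₁.subset (support_mul_subset_right _ _))
    (hv₂.subset (support_mul_subset_right _ _))

lemma convR_smul_left (c : ℝ) (u v : G → ℝ) : convR (c • u) v = c • convR u v := by
  funext w
  simp only [convR, Pi.smul_apply, smul_eq_mul, mul_finsum, mul_assoc]

lemma convR_smul_right (c : ℝ) (u v : G → ℝ) : convR u (c • v) = c • convR u v := by
  funext w
  simp only [convR, Pi.smul_apply, smul_eq_mul, mul_finsum, mul_left_comm c]

lemma convR_single_one_left (v : G → ℝ) : convR (Pi.single 1 1) v = v := by
  funext w
  rw [convR, finsum_eq_single _ 1 fun s hs => by simp [hs]]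
  simp

lemma convR_single_one_right (u : G → ℝ) : convR u (Pi.single 1 1) = u := by
  funext w
  rw [convR_apply_eq_finsum, finsum_eq_single _ 1 fun s hs => by simp [hs]]
  simp

lemma convR_const_left (c : ℝ) (v : G → ℝ) : convR (fun _ => c) v = fun _ => c * ∑ᶠ s, v s := by
  funext w
  rw [convR_apply_eq_finsum, mul_finsum]

lemma finsum_convR {u v : G → ℝ} (hu : (support u).Finite) (hv : (support v).Finite) :
    ∑ᶠ s, convR u v s = (∑ᶠ s, u s) * ∑ᶠ s, v s := by
  -- `convR (fun _ => 1) h` is the constant `∑ᶠ s, h s`: this is associativity tested on `1`.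
  simpa [convR_const_left] using congrFun (convR_assoc (fun _ => 1) hu hv).symm 1

end Convolution

section ConvolutionPowers

variable {G : Type*} [Group G] {u : G → ℝ}

lemma convPow_zero_eq_single (u : G → ℝ) : convPow u 0 = Pi.single 1 1 := by
  funext s
  simp [convPow, Pi.single_apply]

lemma convPow_succ (u : G → ℝ) (n : ℕ) : convPow u (n + 1) = convR u (convPow u n) := rfl

lemma support_convPow_finite (hu : (support u).Finite) : ∀ n, (support (convPow u n)).Finite
  | 0 => by
    rw [convPow_zero_eq_single]
    exact (Set.finite_singleton 1).subset Pi.support_single_subset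
  | n + 1 => (hu.mul (support_convPow_finite hu n)).subset (support_convR_subset _ _)

lemma convPow_nonneg (hu : ∀ s, 0 ≤ u s) : ∀ n s, 0 ≤ convPow u n s
  | 0, s => by rw [convPow_zero_eq_single, Pi.single_apply]; positivity
  | n + 1, _ => finsum_nonneg fun t => mul_nonneg (hu t) (convPow_nonneg hu n _)

lemma finsum_convPow (hu : (support u).Finite) (n : ℕ) :
    ∑ᶠ s, convPow u n s = (∑ᶠ s, u s) ^ n := by
  induction n with
  | zero =>
    rw [convPow_zero_eq_single, pow_zero, finsum_eq_single _ 1 fun s hs => Pi.single_eq_of_ne hs 1,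
      Pi.single_eq_same]
  | succ n ih => rw [convPow_succ, finsum_convR hu (support_convPow_finite hu n), ih, pow_succ']

lemma tendstoUniformly_convPow_of_summable (hu : (support u).Finite)
    (hsum : Summable fun n => ⨆ s, |convPow u n s|) : TendstoUniformly (convPow u) 0 atTop := by
  rw [Metric.tendstoUniformly_iff]
  intro ε hε
  filter_upwards [hsum.tendsto_atTop_zero.eventually (gt_mem_nhds hε)] with n hn s
  have hbdd : BddAbove (Set.range (abs ∘ convPow u n)) := by
    refine ((((support_convPow_finite hu n).image (abs ∘ convPow u n)).insert 0).subset ?_).bddAbove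
    simpa only [support_comp_eq abs abs_eq_zero] using
      range_subset_insert_image_support (abs ∘ convPow u n)
  rw [Pi.zero_apply, dist_zero_left, Real.norm_eq_abs]
  exact (le_ciSup hbdd s).trans_lt hn

end ConvolutionPowers

lemma abs_finsum_mul_le {α : Type*} {g p : α → ℝ} {ε δ : ℝ} (F : Finset α) (hε : 0 ≤ ε)
    (hδ : 0 ≤ δ) (hgF : ∀ x ∉ F, |g x| ≤ ε) (hp : (support p).Finite) (hp0 : ∀ x, 0 ≤ p x)
    (hp1 : ∑ᶠ x, p x = 1) (hpδ : ∀ x, p x ≤ δ) :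
    |∑ᶠ x, g x * p x| ≤ ε + δ * ∑ x ∈ F, |g x| := by
  have hS : support p ⊆ hp.toFinset := hp.coe_toFinset.ge
  have hterm (x : α) : |g x * p x| ≤ ε * p x + δ * if x ∈ F then |g x| else 0 := by
    rw [abs_mul, abs_of_nonneg (hp0 x)]
    split_ifs with hx
    · nlinarith [mul_le_mul_of_nonneg_left (hpδ x) (abs_nonneg (g x)), hp0 x]
    · nlinarith [mul_le_mul_of_nonneg_right (hgF x hx) (hp0 x)]
  rw [finsum_eq_sum_of_support_subset _ hS] at hp1
  calc |∑ᶠ x, g x * p x| = |∑ x ∈ hp.toFinset, g x * p x| := by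
        rw [finsum_eq_sum_of_support_subset _ ((support_mul_subset_right _ _).trans hS)]
    _ ≤ ∑ x ∈ hp.toFinset, (ε * p x + δ * if x ∈ F then |g x| else 0) :=
        (Finset.abs_sum_le_sum_abs _ _).trans (Finset.sum_le_sum fun x _ => hterm x)
    _ = ε + δ * ∑ x ∈ hp.toFinset ∩ F, |g x| := by
        rw [Finset.sum_add_distrib, ← Finset.mul_sum, ← Finset.mul_sum, hp1, mul_one,
          Finset.sum_ite_mem]
    _ ≤ ε + δ * ∑ x ∈ F, |g x| := by
        gcongr
        exact Finset.inter_subset_right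

theorem tendsto_convR_atTop_zero {G : Type*} [Group G] {g : G → ℝ}
    (hg : Tendsto g cofinite (𝓝 0)) {P : ℕ → G → ℝ} (hfin : ∀ n, (support (P n)).Finite)
    (hnonneg : ∀ n s, 0 ≤ P n s) (hmass : ∀ n, ∑ᶠ s, P n s = 1)
    (hunif : TendstoUniformly P 0 atTop) (w : G) :
    Tendsto (fun n => convR g (P n) w) atTop (𝓝 0) := by
  rw [Metric.tendsto_nhds]
  intro ε hε
  have hsmall := Filter.eventually_cofinite.1 (Metric.tendsto_nhds.1 hg (ε / 2) (by positivity))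
  set F := hsmall.toFinset
  have hF (x : G) (hx : x ∉ F) : |g x| ≤ ε / 2 := by
    simp only [F, Set.Finite.mem_toFinset, Set.mem_ofPred_eq, not_not, Real.dist_eq, sub_zero] at hx
    exact hx.le
  set K := ∑ x ∈ F, |g x|
  have hK : 0 ≤ K := Finset.sum_nonneg fun x _ => abs_nonneg (g x)
  set δ := ε / (2 * (K + 1))
  have hδ : 0 < δ := by positivity
  have hδK : δ * K < ε / 2 := by
    rw [div_mul_eq_mul_div, div_lt_div_iff₀ (by positivity) two_pos]
    nlinarith
  -- `convR g (P n) w` is the average of `g` against the translate `x ↦ P n (x⁻¹ * w)` of `P n`.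
  let e : G ≃ G := (Equiv.inv G).trans (Equiv.mulRight w)
  filter_upwards [Metric.tendstoUniformly_iff.1 hunif δ hδ] with n hn
  have hbound := abs_finsum_mul_le (p := fun x => P n (e x)) F (by positivity) hδ.le hF
    ((hfin n).preimage e.injective.injOn) (fun x => hnonneg n _)
    ((finsum_comp_equiv e).trans (hmass n))
    fun x => (le_abs_self _).trans (by simpa [Real.dist_eq] using (hn (e x)).le)
  rw [Real.dist_eq, sub_zero]
  calc |convR g (P n) w| ≤ ε / 2 + δ * K := hbound
    _ < ε := by linarith

section MuOf

variable {G : Type*} [Group G] {f : G → ℝ}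

lemma pos_apply_one_of_finsum_eq_zero (hfin : (support f).Finite) (hsum : ∑ᶠ s, f s = 0)
    (hnonpos : ∀ s, s ≠ 1 → f s ≤ 0) (hf : f ≠ 0) : 0 < f 1 := by
  by_contra! h1
  have hle (s : G) : f s ≤ 0 := if hs : s = 1 then hs ▸ h1 else hnonpos s hs
  obtain ⟨s, hs⟩ := Function.ne_iff.1 hf
  have hneg : 0 < ∑ᶠ s, -f s :=
    finsum_pos (fun s => neg_nonneg.2 (hle s)) ⟨s, neg_pos.2 ((hle s).lt_of_ne hs)⟩
      (by rwa [HasFiniteSupport, support_fun_neg])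
  rw [finsum_neg_distrib, hsum, neg_zero] at hneg
  exact hneg.false

lemma muOf_nonneg (hf1 : 0 < f 1) (hnonpos : ∀ s, s ≠ 1 → f s ≤ 0) (s : G) : 0 ≤ muOf f s := by
  unfold muOf
  split_ifs with hs
  · exact le_rfl
  · exact div_nonneg (neg_nonneg.2 (hnonpos s hs)) hf1.le

lemma support_muOf_subset (f : G → ℝ) : support (muOf f) ⊆ support f := by
  intro s hs
  contrapose! hs
  simp [muOf, notMem_support.1 hs]

lemma muOf_eq_single_sub_smul (hf1 : f 1 ≠ 0) : muOf f = Pi.single 1 1 - (f 1)⁻¹ • f := by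
  funext s
  by_cases hs : s = 1
  · simp [muOf, hs, hf1]
  · simp [muOf, hs, div_eq_inv_mul]

lemma finsum_muOf (hfin : (support f).Finite) (hsum : ∑ᶠ s, f s = 0) (hf1 : f 1 ≠ 0) :
    ∑ᶠ s, muOf f s = 1 := by
  rw [muOf_eq_single_sub_smul hf1]
  simp only [Pi.sub_apply, Pi.smul_apply, smul_eq_mul]
  rw [finsum_sub_distrib ((Set.finite_singleton 1).subset Pi.support_single_subset)
      (hfin.subset (support_mul_subset_right _ _)), ← mul_finsum, hsum,
    finsum_eq_single _ 1 fun s hs => Pi.single_eq_of_ne hs 1]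
  simp

end MuOf

section GreenFunction

variable {G : Type*} [Group G] {g μ : G → ℝ} {c : ℝ}

lemma sub_convR_convPow_eq_smul_sum (hμ : (support μ).Finite)
    (hgμ : convR g μ = g - c • Pi.single 1 1) (n : ℕ) :
    g - convR g (convPow μ n) = c • ∑ k ∈ Finset.range n, convPow μ k := by
  induction n with
  | zero => simp [convPow_zero_eq_single, convR_single_one_right]
  | succ n ih =>
    have hstep : convR g (convPow μ (n + 1)) = convR g (convPow μ n) - c • convPow μ n := by
      rw [convPow_succ, ← convR_assoc g hμ (support_convPow_finite hμ n), hgμ,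
        convR_sub_left _ _ (support_convPow_finite hμ n), convR_smul_left, convR_single_one_left]
    rw [hstep, Finset.sum_range_succ, smul_add, ← ih]
    abel

theorem hasSum_mul_convPow_apply (hμ : (support μ).Finite) (hμ0 : ∀ s, 0 ≤ μ s)
    (hμ1 : ∑ᶠ s, μ s = 1) (hunif : TendstoUniformly (convPow μ) 0 atTop)
    (hg : Tendsto g cofinite (𝓝 0)) (hc : 0 ≤ c) (hgμ : convR g μ = g - c • Pi.single 1 1)
    (w : G) : HasSum (fun k => c * convPow μ k w) (g w) := by
  refine (hasSum_iff_tendsto_nat_of_nonneg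
    (fun k => mul_nonneg hc (convPow_nonneg hμ0 k w)) _).2 ?_
  have htail := tendsto_convR_atTop_zero hg (support_convPow_finite hμ) (convPow_nonneg hμ0)
    (fun n => by rw [finsum_convPow hμ, hμ1, one_pow]) hunif w
  refine (sub_zero (g w) ▸ tendsto_const_nhds.sub htail).congr fun n => ?_
  simpa [Finset.mul_sum] using congrFun (sub_convR_convPow_eq_smul_sum hμ hgμ n) w

end GreenFunction

theorem stmt6_general {G : Type*} [Group G]
    (f : G → ℝ) (hf : WellBalancedR f)
    (hsum : Summable (fun k : ℕ => ⨆ s : G, |convPow (muOf f) k s|))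
    (g : G → ℝ) (hg0 : Tendsto g cofinite (𝓝 0))
    (hgf : ∀ w : G, (∑ᶠ s : G, g (w * s⁻¹) * f s) = if w = 1 then 1 else 0) :
    g = omegaOf f := by
  obtain ⟨hfin, hsum0, hnonpos, -, -⟩ := hf
  have hgf' : convR g f = Pi.single 1 1 :=
    funext fun w => by rw [convR_apply_eq_finsum, hgf, Pi.single_apply]
  have hf1 : 0 < f 1 := pos_apply_one_of_finsum_eq_zero hfin hsum0 hnonpos fun hf0 => by
    simpa [hf0, convR] using congrFun hgf' 1
  have hμ : (support (muOf f)).Finite := hfin.subset (support_muOf_subset f)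
  have hgμ : convR g (muOf f) = g - (f 1)⁻¹ • Pi.single 1 1 := by
    rw [muOf_eq_single_sub_smul hf1.ne',
      convR_sub_right _ ((Set.finite_singleton 1).subset Pi.support_single_subset)
        (hfin.subset (support_const_smul_subset _ _)),
      convR_single_one_right, convR_smul_right, hgf']
  funext w
  rw [omegaOf, ← tsum_mul_left]
  exact (hasSum_mul_convPow_apply hμ (muOf_nonneg hf1 hnonpos) (finsum_muOf hfin hsum0 hf1.ne')
    (tendstoUniformly_convPow_of_summable hμ hsum) hg0 (inv_nonneg.2 hf1.le) hgμ w).tsum_eq.symm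

/-- If `g ∈ C₀(Γ)` and `gf = δ_e` then `g = ω`. -/
theorem stmt6 {G : Type*} [Group G] [Countable G] [Infinite G]
    (f : G → ℝ) (hf : WellBalancedR f)
    (hsum : Summable (fun k : ℕ => ⨆ s : G, |convPow (muOf f) k s|))
    (g : G → ℝ) (hg0 : Tendsto g cofinite (𝓝 0))
    (hgf : ∀ w : G, (∑ᶠ s : G, g (w * s⁻¹) * f s) = if w = 1 then 1 else 0) :
    g = omegaOf f :=
  stmt6_general f hf hsum g hg0 hgf
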